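/- Let P be a basic positive program and M a weakly well-supported model of P with level mapping ℓ. Then for every atom a ∈ M, a ∈ T_P^{ℓ(a)+1}(∅, M). -/
import Mathlib


universe u

/-- An abstract constraint atom (c-atom): a domain and a set of solutions,
each solution being a subset of the domain. -/
structure CAtom (α : Type u) where
  dom : Set α
  sol : Set (Set α)
  sol_sub : ∀ X ∈ sol, X ⊆ dom

variable {α : Type u}

/-- `S ⊨ A` : satisfaction of a c-atom. -/
def CAtom.satBy (A : CAtom α) (S : Set α) : Prop := S ∩ A.dom ∈ A.sol

/-- `S ⊨_M A` : conditional satisfaction of a c-atom. -/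
def CAtom.condSatBy (A : CAtom α) (S M : Set α) : Prop :=
  A.satBy S ∧ ∀ I ⊆ A.dom, S ∩ A.dom ⊆ I → I ⊆ M ∩ A.dom → I ∈ A.sol

/-- A c-atom is monotone if solutions are closed under supersets (within the domain). -/
def CAtom.IsMonotone (A : CAtom α) : Prop :=
  ∀ X Y : Set α, X ⊆ Y → Y ⊆ A.dom → X ∈ A.sol → Y ∈ A.sol

/-- The complement c-atom `Ā = (A_d, 2^{A_d} \ A_c)`. -/
def CAtom.compl (A : CAtom α) : CAtom α :=
  ⟨A.dom, {X | X ⊆ A.dom ∧ X ∉ A.sol}, fun _ hX => hX.1⟩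

/-- The elementary c-atom `({a}, {{a}})`. -/
def elemAtom (a : α) : CAtom α :=
  ⟨{a}, {{a}}, by intro X hX; rw [Set.mem_singleton_iff] at hX; exact hX ▸ subset_rfl⟩

/-- A basic rule: head is an elementary c-atom `({a},{{a}})` (encoded as `some a`)
or the constraint head `⊥` (encoded as `none`); the body consists of positive
c-atoms `pos` and negation-as-failure c-atoms `neg`. -/
structure Rule (α : Type u) where
  head : Option α
  pos : Set (CAtom α)
  neg : Set (CAtom α)

/-- `M ⊨ body(r)`. -/
def Rule.bodySat (r : Rule α) (M : Set α) : Prop :=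
  (∀ A ∈ r.pos, A.satBy M) ∧ (∀ A ∈ r.neg, ¬ A.satBy M)

/-- Satisfaction of a rule head: the elementary head `({a},{{a}})` is satisfied iff
`a ∈ M`; the constraint head `⊥` is never satisfied. -/
def headSat (h : Option α) (M : Set α) : Prop := ∃ a, h = some a ∧ a ∈ M

/-- `M` is a model of `P`. -/
def isModel (P : Set (Rule α)) (M : Set α) : Prop :=
  ∀ r ∈ P, r.bodySat M → headSat r.head M

/-- A program is positive if no rule has naf-atoms. -/
def isPositive (P : Set (Rule α)) : Prop := ∀ r ∈ P, r.neg = ∅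

/-- The immediate consequence operator
`T_P(S,M) = { a | ∃ r ∈ P, head(r) = ({a},{{a}}), S ⊨_M pos(r) }`. -/
def TP (P : Set (Rule α)) (S M : Set α) : Set α :=
  { a | ∃ r ∈ P, r.head = some a ∧ ∀ A ∈ r.pos, A.condSatBy S M }

/-- The iteration `T_P^i(∅, M)`. -/
def TPiter (P : Set (Rule α)) (M : Set α) : ℕ → Set α
  | 0 => ∅
  | n + 1 => TP P (TPiter P M n) M

/-- The limit `T_P^∞(∅, M)`. -/
def TPinf (P : Set (Rule α)) (M : Set α) : Set α := ⋃ i, TPiter P M i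

/-- `M` is an answer set of a (positive) basic program `P`:
`M` is a model of `P` and `M = T_P^∞(∅,M)`. -/
def answerSetPos (P : Set (Rule α)) (M : Set α) : Prop :=
  isModel P M ∧ M = TPinf P M

/-- The reduct `P^M`: delete rules with `not A` in the body such that `M ⊨ A`,
and delete the naf-atoms from the remaining rules. -/
def reduct (P : Set (Rule α)) (M : Set α) : Set (Rule α) :=
  { r' | ∃ r ∈ P, (∀ A ∈ r.neg, ¬ A.satBy M) ∧ r' = ⟨r.head, r.pos, ∅⟩ }

/-- The complement program `𝒞(P)`: replace each `not A` by the complement c-atom `Ā`. -/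
def complProg (P : Set (Rule α)) : Set (Rule α) :=
  { r' | ∃ r ∈ P, r' = ⟨r.head, r.pos ∪ CAtom.compl '' r.neg, ∅⟩ }

/-- `M` is an answer set by reduct of `P` iff `M` is an answer set of `P^M`. -/
def answerSetByReduct (P : Set (Rule α)) (M : Set α) : Prop :=
  answerSetPos (reduct P M) M

/-- `M` is an answer set by complement of `P` iff `M` is an answer set of `𝒞(P)`. -/
def answerSetByCompl (P : Set (Rule α)) (M : Set α) : Prop :=
  answerSetPos (complProg P) M

/-- `P` is naf-monotone: every c-atom occurring in a naf-atom of `P` is monotone. -/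
def nafMonotone (P : Set (Rule α)) : Prop := ∀ r ∈ P, ∀ A ∈ r.neg, A.IsMonotone

/-- `M` is a weakly well-supported model of `P`: `M` is a model and there is a level
mapping `ℓ` (into the positive integers) such that each `b ∈ M` has a rule `r` with
head `({b},{{b}})`, `M ⊨ body(r)`, and for each `A ∈ pos(r)`, `L(A,M)` is defined and
`ℓ(b) > L(A,M)`, i.e. there is a solution `X ∈ A_c`, `X ⊆ M`, `X ⊨_M A` whose
members all have level below `ℓ(b)`. -/
def weaklyWS (P : Set (Rule α)) (M : Set α) : Prop :=
  isModel P M ∧ ∃ ℓ : α → ℕ, (∀ a ∈ M, 0 < ℓ a) ∧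
    ∀ b ∈ M, ∃ r ∈ P, r.head = some b ∧ r.bodySat M ∧
      ∀ A ∈ r.pos, ∃ X ∈ A.sol, X ⊆ M ∧ A.condSatBy X M ∧ ∀ x ∈ X, ℓ x < ℓ b

/-- `M` is a strongly well-supported model of `P`: as weakly well-supported, with
the level condition additionally imposed on the complements of the naf-atoms. -/
def stronglyWS (P : Set (Rule α)) (M : Set α) : Prop :=
  isModel P M ∧ ∃ ℓ : α → ℕ, (∀ a ∈ M, 0 < ℓ a) ∧
    ∀ b ∈ M, ∃ r ∈ P, r.head = some b ∧ r.bodySat M ∧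
      (∀ A ∈ r.pos, ∃ X ∈ A.sol, X ⊆ M ∧ A.condSatBy X M ∧ ∀ x ∈ X, ℓ x < ℓ b) ∧
      (∀ A ∈ r.neg, ∃ X ∈ A.compl.sol, X ⊆ M ∧ A.compl.condSatBy X M ∧
        ∀ x ∈ X, ℓ x < ℓ b)

/-- A normal logic program rule `a ← a₁,…,aₙ, not b₁,…,not bₘ`. -/
structure NRule (α : Type u) where
  head : α
  pos : Set α
  neg : Set α

/-- The Gelfond-Lifschitz reduct `GL(P,M)`. -/
def GLreduct (P : Set (NRule α)) (M : Set α) : Set (NRule α) :=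
  { n | ∃ r ∈ P, r.neg ∩ M = ∅ ∧ n = ⟨r.head, r.pos, ∅⟩ }

/-- The least model of a definite normal program. -/
def leastModel (Q : Set (NRule α)) : Set α :=
  ⋂₀ { S | ∀ r ∈ Q, r.pos ⊆ S → r.head ∈ S }

/-- `M` is a Gelfond-Lifschitz stable model of the normal program `P`. -/
def glStable (P : Set (NRule α)) (M : Set α) : Prop := M = leastModel (GLreduct P M)

/-- The translation `catom(P)`: replace each atom occurrence by its elementary c-atom. -/
def catomProg (P : Set (NRule α)) : Set (Rule α) :=
  { r' | ∃ r ∈ P, r' = ⟨some r.head, elemAtom '' r.pos, elemAtom '' r.neg⟩ }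

/-- A general (positive) rule: a c-atom head and a body of c-atoms. -/
structure GRule (α : Type u) where
  head : CAtom α
  pos : Set (CAtom α)

/-- `M` is a model of a general positive program. -/
def isGModel (P : Set (GRule α)) (M : Set α) : Prop :=
  ∀ r ∈ P, (∀ A ∈ r.pos, A.satBy M) → r.head.satBy M

/-- The instance `inst(P,M)` of a general program w.r.t. `M`. -/
def inst (P : Set (GRule α)) (M : Set α) : Set (Rule α) :=
  { r' | ∃ r ∈ P, M ∩ r.head.dom ∈ r.head.sol ∧
      ∃ b ∈ M ∩ r.head.dom, r' = ⟨some b, r.pos, ∅⟩ }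

/-- The set `P(S)` of rules applicable in `S`. -/
def appl (P : Set (GRule α)) (S : Set α) : Set (GRule α) :=
  { r ∈ P | ∀ A ∈ r.pos, A.satBy S }

/-- The nondeterministic one-step provability operator `T^{nd}_P`. -/
def Tnd (P : Set (GRule α)) (S : Set α) : Set (Set α) :=
  { S' | S' ⊆ (⋃ r ∈ appl P S, r.head.dom) ∧ ∀ r ∈ appl P S, r.head.satBy S' }

/-- `M` is a stable (derivable) model of a general positive program in the sense of
Marek and Truszczyński: `M` is the result of a `P`-computation. -/
def mtStable (P : Set (GRule α)) (M : Set α) : Prop :=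
  ∃ X : ℕ → Set α, X 0 = ∅ ∧ (∀ n, X n ⊆ X (n + 1)) ∧
    (∀ n, X (n + 1) ∈ Tnd P (X n)) ∧ M = ⋃ n, X n

/-- The FLP-reduct: keep exactly the rules whose body is satisfied by `M`. -/
def FLP (P : Set (Rule α)) (M : Set α) : Set (Rule α) := { r ∈ P | r.bodySat M }

/-- The unfolding of a basic positive program into a normal logic program:
each body c-atom `A` is replaced by the positive atoms of one of its solutions
together with the negations of the remaining atoms of its domain. -/
def unfolding (P : Set (Rule α)) : Set (NRule α) :=
  { n | ∃ r ∈ P, ∃ a, r.head = some a ∧ ∃ f : CAtom α → Set α,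
      (∀ A ∈ r.pos, f A ∈ A.sol) ∧
      n = ⟨a, ⋃ A ∈ r.pos, f A, ⋃ A ∈ r.pos, A.dom \ f A⟩ }

lemma condSat_mono {A : CAtom α} {S S' M : Set α} (hSS' : S ⊆ S') (hS'M : S' ⊆ M)
    (h : A.condSatBy S M) : A.condSatBy S' M := by
  obtain ⟨hsat, hcond⟩ := h
  constructor
  · exact hcond (S' ∩ A.dom) Set.inter_subset_right
      (Set.inter_subset_inter_left _ hSS')
      (Set.inter_subset_inter_left _ hS'M)
  · intro I hI h1 h2
    exact hcond I hI ((Set.inter_subset_inter_left _ hSS').trans h1) h2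

lemma TP_sub_M {P : Set (Rule α)} {S M : Set α} (hP : isPositive P) (hM : isModel P M)
    (hSM : S ⊆ M) : TP P S M ⊆ M := by
  intro a ⟨r, hrP, hhead, hcond⟩
  have hbody : r.bodySat M := by
    constructor
    · intro A hA
      exact (condSat_mono hSM subset_rfl (hcond A hA)).1
    · intro A hA
      rw [hP r hrP] at hA
      exact absurd hA (Set.notMem_empty A)
  obtain ⟨b, hb, hbM⟩ := hM r hrP hbody
  rw [hhead] at hb
  cases hb
  exact hbM

lemma TPiter_sub_M {P : Set (Rule α)} {M : Set α} (hP : isPositive P) (hM : isModel P M) :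
    ∀ n, TPiter P M n ⊆ M := by
  intro n
  induction n with
  | zero => exact Set.empty_subset M
  | succ n ih => exact TP_sub_M hP hM ih

lemma TPiter_succ {P : Set (Rule α)} {M : Set α} (hP : isPositive P) (hM : isModel P M) :
    ∀ n, TPiter P M n ⊆ TPiter P M (n + 1) := by
  intro n
  induction n with
  | zero => exact Set.empty_subset _
  | succ k ihk =>
    rintro a ⟨r, hrP, hhead, hcond⟩
    exact ⟨r, hrP, hhead, fun A hA => condSat_mono ihk
      (TPiter_sub_M hP hM (k+1)) (hcond A hA)⟩

lemma TPiter_mono {P : Set (Rule α)} {M : Set α} (hP : isPositive P) (hM : isModel P M) :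
    ∀ {m n : ℕ}, m ≤ n → TPiter P M m ⊆ TPiter P M n := by
  intro m n h
  induction h with
  | refl => exact subset_rfl
  | step _ ih => exact ih.trans (TPiter_succ hP hM _)

/-- If `M` is a weakly well-supported model of a basic positive program
`P` with level mapping `ℓ`, then every `a ∈ M` satisfies `a ∈ T_P^{ℓ(a)+1}(∅,M)`. -/
theorem stmt12 (P : Set (Rule α)) (M : Set α) (ℓ : α → ℕ)
    (hP : isPositive P) (hM : isModel P M) (hpos : ∀ a ∈ M, 0 < ℓ a)
    (hws : ∀ b ∈ M, ∃ r ∈ P, r.head = some b ∧ r.bodySat M ∧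
      ∀ A ∈ r.pos, ∃ X ∈ A.sol, X ⊆ M ∧ A.condSatBy X M ∧ ∀ x ∈ X, ℓ x < ℓ b) :
    ∀ a ∈ M, a ∈ TPiter P M (ℓ a + 1) := by
  suffices h : ∀ n, ∀ a ∈ M, ℓ a = n → a ∈ TPiter P M (ℓ a + 1) from
    fun a ha => h (ℓ a) a ha rfl
  intro n
  induction n using Nat.strong_induction_on with
  | _ n ih =>
  intro a haM hn
  subst hn
  obtain ⟨r, hrP, hhead, _, hA⟩ := hws a haM
  refine ⟨r, hrP, hhead, fun A hAr => ?_⟩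
  obtain ⟨X, hXsol, hXM, hXcond, hXlvl⟩ := hA A hAr
  have hXsub : X ⊆ TPiter P M (ℓ a) := by
    intro x hxX
    have hx := ih (ℓ x) (hXlvl x hxX) x (hXM hxX) rfl
    exact TPiter_mono hP hM (hXlvl x hxX) hx
  exact condSat_mono hXsub (TPiter_sub_M hP hM _) hXcond
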